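/- Let q be an odd prime power, n ≥ 2, and let α ∈ F_q[x] be a nonzero polynomial with deg α < n. Then there exists a = (a_1,…,a_{n−1}) in the algebraic closure F̄_q of F_q such that, writing f(x) = x^n + a_{n−1}x^{n−1} + ⋯ + a_1 x, the polynomials D_f(t) = disc_x(f(x)+t) and D_{f+α}(t) = disc_x(f(x)+α(x)+t) in F̄_q[t] are both nonzero and have no common root in F̄_q. Equivalently, the polynomial function a ↦ Res_t(D_f(t), D_{f+α}(t)) on F̄_q^{n−1} is not identically zero. -/

import Mathlib

open Polynomial

noncomputable section
open scoped Classical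

/-- The Sylvester matrix of `P` and `Q` with respect to formal degrees `m` and `n`. -/
def sylvesterMatrix {R : Type*} [CommRing R] (m n : ℕ) (P Q : Polynomial R) :
    Matrix (Fin (n + m)) (Fin (n + m)) R :=
  Matrix.of fun i j =>
    if (i : ℕ) < n then
      (if (i : ℕ) ≤ (j : ℕ) ∧ (j : ℕ) ≤ (i : ℕ) + m then P.coeff (m + i - j) else 0)
    else
      (if (i : ℕ) - n ≤ (j : ℕ) ∧ (j : ℕ) ≤ (i : ℕ) then Q.coeff ((i : ℕ) - j) else 0)

/-- The resultant of `P` and `Q` with respect to formal degrees `m` and `n`: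
the determinant of the `(m+n) × (m+n)` Sylvester matrix. -/
def presultant {R : Type*} [CommRing R] (m n : ℕ) (P Q : Polynomial R) : R :=
  (sylvesterMatrix m n P Q).det

/-- The discriminant of a polynomial `P` of degree `m`; for monic `P` this agrees with the
standard discriminant `∏_{i<j} (r_i - r_j)²` over the roots of `P` in an algebraic closure. -/
def pdisc {R : Type*} [CommRing R] (P : Polynomial R) : R :=
  (-1) ^ (P.natDegree * (P.natDegree - 1) / 2) *
    presultant P.natDegree (P.natDegree - 1) P (Polynomial.derivative P)

/-- `Dpoly g` is `D_g(t) = disc_x (g(x) + t)`, a polynomial in `t`. -/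
def Dpoly {R : Type*} [CommRing R] (g : Polynomial R) : Polynomial R :=
  pdisc (g.map Polynomial.C + Polynomial.C Polynomial.X)

/-- `fPoly n a = x^n + a_{n-1} x^{n-1} + ... + a_1 x`. -/
def fPoly {R : Type*} [CommRing R] (n : ℕ) (a : Fin (n - 1) → R) : Polynomial R :=
  X ^ n + ∑ i : Fin (n - 1), Polynomial.C (a i) * X ^ ((i : ℕ) + 1)

/-!
`D_g(ρ)` is, up to sign, the resultant of `g + ρ` and `g'`, so for monic `g` it vanishes only
when `g + ρ` and `g'` have a common root `θ`, i.e. when `-ρ = g(θ)` is a critical value of `g`.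
It therefore suffices to find `f = x^n + ⋯ + a_1 x` such that `f'` and `(f + α)'` are nonzero
and `f`, `f + α` have no critical value in common. If `n = 0` in the field, `f = x^n + c x` has
no critical point at all. Otherwise `f = (x + b)^n - b^n` has the single critical value `-b^n`,
and a critical point `η` of `f + α` with that value satisfies `u^n = -α(η)` and
`n u^(n-1) = -α'(η)` with `u = η + b`. Eliminating `u` makes `η` a root of the nonzero
polynomial `n^n α^n + α α'^n` and gives `b = n α(η) / α'(η) - η`, which excludes only finitely
many `b`.
-/

theorem sylvesterMatrix_eq_submatrix {R : Type*} [CommRing R] (m n : ℕ) (P Q : R[X]) :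
    sylvesterMatrix m n P Q =
      (sylvester P Q m n).transpose.submatrix (Fin.revPerm.trans (finCongr (add_comm n m)))
        (Fin.revPerm.trans (finCongr (add_comm n m))) := by
  ext i j
  simp only [sylvesterMatrix, sylvester, Matrix.of_apply, Matrix.submatrix_apply,
    Matrix.transpose_apply, Equiv.trans_apply, Fin.revPerm_apply, finCongr_apply, Fin.addCases,
    Fin.val_cast, Fin.val_rev, Set.mem_Icc, Fin.val_castLT, Fin.val_subNat, eq_rec_constant]
  have hi := i.isLt
  have hj := j.isLt
  split_ifs <;> first | rfl | omega | (congr 1; omega)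

theorem presultant_eq_resultant {R : Type*} [CommRing R] (m n : ℕ) (P Q : R[X]) :
    presultant m n P Q = P.resultant Q m n := by
  rw [presultant, sylvesterMatrix_eq_submatrix, Matrix.det_submatrix_equiv_self,
    Matrix.det_transpose, resultant]

theorem pdisc_ne_zero_of_isCoprime {R : Type*} [CommRing R] [IsDomain R] {P : R[X]}
    (hP : P.Monic) (h : IsCoprime P (derivative P)) : pdisc P ≠ 0 := by
  have hdeg : P.natDegree - 1 =
      (derivative P).natDegree + (P.natDegree - 1 - (derivative P).natDegree) := by
    have := natDegree_derivative_le P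
    omega
  rw [pdisc, presultant_eq_resultant, hdeg, resultant_add_right_deg _ _ _ _ _ le_rfl,
    hP.coeff_natDegree, one_pow, one_mul]
  exact mul_ne_zero (pow_ne_zero _ (neg_ne_zero.2 one_ne_zero)) (resultant_ne_zero _ _ h)

theorem pdisc_map {R S : Type*} [CommRing R] [CommRing S] (φ : R →+* S) {P : R[X]}
    (h : (P.map φ).natDegree = P.natDegree) : φ (pdisc P) = pdisc (P.map φ) := by
  simp only [pdisc, presultant_eq_resultant, map_mul, map_pow, map_neg, map_one, h,
    ← resultant_map_map, derivative_map]

theorem eval_Dpoly {R : Type*} [CommRing R] (g : R[X]) (ρ : R) :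
    (Dpoly g).eval ρ = pdisc (g + C ρ) := by
  have hmap : (g.map C + C X).map (evalRingHom ρ) = g + C ρ := by
    rw [Polynomial.map_add, Polynomial.map_map, map_C, coe_evalRingHom, eval_X,
      show (evalRingHom ρ).comp C = RingHom.id R from RingHom.ext fun _ => eval_C, map_id]
  have hdeg : (g.map C + C X).natDegree = g.natDegree := by
    rw [natDegree_add_C, natDegree_map_eq_of_injective C_injective]
  rw [Dpoly, ← coe_evalRingHom, pdisc_map _ (by rw [hmap, natDegree_add_C, hdeg]), hmap]

theorem natDegree_pos_of_derivative_ne_zero {R : Type*} [Semiring R] {p : R[X]}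
    (h : derivative p ≠ 0) : 0 < p.natDegree :=
  Nat.pos_of_ne_zero fun h0 => h (derivative_of_natDegree_zero h0)

theorem Polynomial.Monic.derivative_ne_zero {R : Type*} [Semiring R] {p : R[X]} (hp : p.Monic)
    (h : (p.natDegree : R) ≠ 0) : derivative p ≠ 0 := by
  intro h0
  obtain ⟨k, hk⟩ : ∃ k, p.natDegree = k + 1 :=
    Nat.exists_eq_add_one.2 (Nat.pos_of_ne_zero fun h' => h (by simp [h']))
  have hk0 := congrArg (coeff · k) h0
  simp only [coeff_derivative, coeff_zero] at hk0
  rw [← hk, hp.coeff_natDegree, one_mul] at hk0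
  exact h (by rw [hk]; push_cast; exact hk0)

theorem exists_multiple_root_of_eval_Dpoly_eq_zero {K : Type*} [Field K] [IsAlgClosed K]
    {g : K[X]} (hg : g.Monic) (hdeg : 0 < g.natDegree) {ρ : K} (h : (Dpoly g).eval ρ = 0) :
    ∃ θ, g.eval θ + ρ = 0 ∧ (derivative g).eval θ = 0 := by
  have hmon : (g + C ρ).Monic :=
    hg.add_of_left (degree_C_le.trans_lt (natDegree_pos_iff_degree_pos.1 hdeg))
  have hcop : ¬ IsCoprime (g + C ρ) (derivative (g + C ρ)) :=
    fun hc => pdisc_ne_zero_of_isCoprime hmon hc (eval_Dpoly g ρ ▸ h)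
  rw [isCoprime_iff_aeval_ne_zero_of_isAlgClosed K K] at hcop
  push Not at hcop
  simpa using hcop

theorem Dpoly_ne_zero {K : Type*} [Field K] [IsAlgClosed K] {g : K[X]} (hg : g.Monic)
    (hg' : derivative g ≠ 0) : Dpoly g ≠ 0 := by
  obtain ⟨ρ, hρ⟩ := Infinite.exists_notMem_finset
    ((derivative g).roots.toFinset.image fun θ => -g.eval θ)
  intro h
  obtain ⟨θ, hθ, hθ'⟩ := exists_multiple_root_of_eval_Dpoly_eq_zero hg
    (natDegree_pos_of_derivative_ne_zero hg') (ρ := ρ) (by rw [h, eval_zero])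
  exact hρ (Finset.mem_image.2 ⟨θ, by simpa [hg'] using hθ', by linear_combination -hθ⟩)

def DisjointCriticalValues {R : Type*} [Semiring R] (f g : R[X]) : Prop :=
  ∀ θ η, (derivative f).eval θ = 0 → (derivative g).eval η = 0 → f.eval θ ≠ g.eval η

theorem DisjointCriticalValues.not_eval_Dpoly_eq_zero {K : Type*} [Field K] [IsAlgClosed K]
    {f g : K[X]} (hfg : DisjointCriticalValues f g) (hf : f.Monic) (hfdeg : 0 < f.natDegree)
    (hg : g.Monic) (hgdeg : 0 < g.natDegree) (ρ : K) :
    ¬ ((Dpoly f).eval ρ = 0 ∧ (Dpoly g).eval ρ = 0) := by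
  rintro ⟨hfρ, hgρ⟩
  obtain ⟨θ, hθ, hθ'⟩ := exists_multiple_root_of_eval_Dpoly_eq_zero hf hfdeg hfρ
  obtain ⟨η, hη, hη'⟩ := exists_multiple_root_of_eval_Dpoly_eq_zero hg hgdeg hgρ
  exact hfg θ η hθ' hη' (by linear_combination hθ - hη)

theorem mul_eq_natCast_mul_of_pow_add_eq_zero {R : Type*} [CommRing R] {n : ℕ} {u A A' : R}
    (h : u ^ n + A = 0) (h' : n * u ^ (n - 1) + A' = 0) : u * A' = n * A := by
  cases n with
  | zero => simp_all
  | succ k =>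
    simp only [Nat.add_sub_cancel, Nat.cast_succ] at h' ⊢
    linear_combination u * h' - (k + 1) * h

theorem natCast_pow_mul_pow_add_mul_pow_eq_zero {R : Type*} [CommRing R] {n : ℕ} {u A A' : R}
    (h : u ^ n + A = 0) (h' : n * u ^ (n - 1) + A' = 0) :
    (n : R) ^ n * A ^ n + A * A' ^ n = 0 := by
  have key : (n * A) ^ n = (u * A') ^ n := by rw [mul_eq_natCast_mul_of_pow_add_eq_zero h h']
  linear_combination key + A' ^ n * h

theorem eq_div_of_pow_add_eq_zero {K : Type*} [Field K] {n : ℕ} (hn : (n : K) ≠ 0) {u A A' : K}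
    (h : u ^ n + A = 0) (h' : n * u ^ (n - 1) + A' = 0) : u = n * A / A' := by
  have key := mul_eq_natCast_mul_of_pow_add_eq_zero h h'
  rcases eq_or_ne A' 0 with hA' | hA'
  · -- both sides vanish, the right one by the convention `x / 0 = 0`
    have hA : A = 0 := by simpa [hA', hn] using key.symm
    have hn0 : n ≠ 0 := by rintro rfl; exact hn Nat.cast_zero
    simpa [hA, hA', hn0] using h
  · rw [eq_div_iff hA', key]

theorem C_pow_mul_pow_add_mul_derivative_pow_ne_zero {K : Type*} [Field K] {n : ℕ}
    (hnK : (n : K) ≠ 0) {β : K[X]} (hβ0 : β ≠ 0) (hβ : β.natDegree < n) :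
    C ((n : K) ^ n) * β ^ n + β * derivative β ^ n ≠ 0 := by
  have hlead : (C ((n : K) ^ n) * β ^ n).natDegree = n * β.natDegree := by
    rw [natDegree_C_mul (pow_ne_zero _ hnK), natDegree_pow]
  rcases Nat.eq_zero_or_pos β.natDegree with hd | hd
  · rw [derivative_of_natDegree_zero hd, zero_pow (by omega), mul_zero, add_zero]
    exact mul_ne_zero (C_ne_zero.2 (pow_ne_zero _ hnK)) (pow_ne_zero _ hβ0)
  have hd' : (derivative β).natDegree + 1 ≤ β.natDegree := by
    have := natDegree_derivative_le β
    omega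
  have hlt : (β * derivative β ^ n).natDegree < (C ((n : K) ^ n) * β ^ n).natDegree :=
    calc _ ≤ β.natDegree + n * (derivative β).natDegree :=
          natDegree_mul_le.trans (Nat.add_le_add_left natDegree_pow_le _)
      _ < n * β.natDegree := by
          have := Nat.mul_le_mul_left n hd'
          rw [mul_add, mul_one] at this
          linarith
      _ = _ := hlead.symm
  refine ne_zero_of_natDegree_gt (n := 0) ?_
  rw [natDegree_add_eq_left_of_natDegree_lt hlt, hlead]
  exact Nat.mul_pos (by omega) hd

theorem disjointCriticalValues_X_add_C_pow {K : Type*} [Field K] {n : ℕ} (hnK : (n : K) ≠ 0)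
    (β : K[X]) {b : K}
    (hb : ∀ η, (C ((n : K) ^ n) * β ^ n + β * derivative β ^ n).eval η = 0 →
      b ≠ n * β.eval η / (derivative β).eval η - η) :
    DisjointCriticalValues ((X + C b) ^ n - C (b ^ n)) ((X + C b) ^ n - C (b ^ n) + β) := by
  intro θ η hθ hη heq
  simp only [derivative_sub, derivative_add, derivative_pow, derivative_X, derivative_C,
    eval_sub, eval_add, eval_mul, eval_pow, eval_natCast, eval_X, eval_C, map_natCast,
    add_zero, sub_zero, mul_one, mul_eq_zero, hnK, false_or, pow_eq_zero_iff'] at hθ hη heq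
  obtain ⟨hθb, hn⟩ := hθ
  have hη0 : (η + b) ^ n + β.eval η = 0 := by
    rw [hθb, zero_pow (by omega)] at heq
    linear_combination -heq
  refine hb η (by simpa using natCast_pow_mul_pow_add_mul_pow_eq_zero hη0 hη) ?_
  linear_combination eq_div_of_pow_add_eq_zero hnK hη0 hη

theorem exists_disjointCriticalValues_of_natCast_eq_zero {K : Type*} [Field K] [Infinite K]
    {n : ℕ} (hn : 2 ≤ n) (hnK : (n : K) = 0) (β : K[X]) :
    ∃ f : K[X], f.Monic ∧ f.natDegree = n ∧ f.coeff 0 = 0 ∧ derivative f ≠ 0 ∧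
      derivative (f + β) ≠ 0 ∧ DisjointCriticalValues f (f + β) := by
  obtain ⟨c, hc⟩ := Infinite.exists_notMem_finset ({0, -(derivative β).coeff 0} : Finset K)
  simp only [Finset.mem_insert, Finset.mem_singleton, not_or] at hc
  have hdeg : (C c * X).degree < (n : WithBot ℕ) :=
    (degree_C_mul_X_le c).trans_lt (by exact_mod_cast (by omega : 1 < n))
  have hf' : derivative (X ^ n + C c * X) = C c := by
    rw [derivative_add, derivative_X_pow, hnK, C_0, zero_mul, zero_add, derivative_C_mul_X]
  refine ⟨X ^ n + C c * X, monic_X_pow_add hdeg, ?_, by simp [show 0 ≠ n by omega],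
    by rw [hf']; exact C_ne_zero.2 hc.1, ?_, fun θ η hθ => by simp [hf', hc.1] at hθ⟩
  · rw [natDegree_add_eq_left_of_degree_lt (by rwa [degree_X_pow]), natDegree_X_pow]
  · rw [derivative_add, hf']
    intro h
    have h0 := congrArg (coeff · 0) h
    simp only [coeff_add, coeff_C_zero, coeff_zero] at h0
    exact hc.2 (by linear_combination h0)

theorem exists_disjointCriticalValues_of_natCast_ne_zero {K : Type*} [Field K] [Infinite K]
    {n : ℕ} (hnK : (n : K) ≠ 0) {β : K[X]} (hβ0 : β ≠ 0) (hβ : β.degree < n) :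
    ∃ f : K[X], f.Monic ∧ f.natDegree = n ∧ f.coeff 0 = 0 ∧ derivative f ≠ 0 ∧
      derivative (f + β) ≠ 0 ∧ DisjointCriticalValues f (f + β) := by
  have hn : n ≠ 0 := by rintro rfl; exact hnK Nat.cast_zero
  have hH := C_pow_mul_pow_add_mul_derivative_pow_ne_zero hnK hβ0
    ((natDegree_lt_iff_degree_lt hβ0).2 hβ)
  obtain ⟨b, hb⟩ := Infinite.exists_notMem_finset
    ((C ((n : K) ^ n) * β ^ n + β * derivative β ^ n).roots.toFinset.image
      fun η => n * β.eval η / (derivative β).eval η - η)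
  have hf : ((X + C b) ^ n - C (b ^ n)).Monic :=
    ((monic_X_add_C b).pow n).sub_of_left (degree_C_le.trans_lt
      (natDegree_pos_iff_degree_pos.1 (by rw [natDegree_pow, natDegree_X_add_C]; omega)))
  have hfn : ((X + C b) ^ n - C (b ^ n)).natDegree = n := by
    rw [natDegree_sub_C, natDegree_pow, natDegree_X_add_C, mul_one]
  have hβf : β.degree < ((X + C b) ^ n - C (b ^ n)).degree := by
    rwa [degree_eq_natDegree hf.ne_zero, hfn]
  refine ⟨_, hf, hfn, by simp [coeff_zero_eq_eval_zero], hf.derivative_ne_zero (by rwa [hfn]),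
    (hf.add_of_left hβf).derivative_ne_zero
      (by rwa [natDegree_add_eq_left_of_degree_lt hβf, hfn]),
    disjointCriticalValues_X_add_C_pow hnK β fun η hη hbη => hb (Finset.mem_image.2
      ⟨η, Multiset.mem_toFinset.2 ((mem_roots hH).2 hη), hbη.symm⟩)⟩

theorem fPoly_coeff_succ {R : Type*} [CommRing R] {n : ℕ} (hn : 1 ≤ n) {f : R[X]}
    (hf : f.Monic) (hdeg : f.natDegree = n) (h0 : f.coeff 0 = 0) :
    fPoly n (fun i => f.coeff ((i : ℕ) + 1)) = f := by
  conv_rhs => rw [hf.as_sum, hdeg]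
  obtain ⟨k, rfl⟩ := Nat.exists_eq_add_of_le' hn
  rw [fPoly, Finset.sum_range_succ', h0, map_zero, zero_mul, add_zero, Nat.add_sub_cancel,
    Fin.sum_univ_eq_sum_range (fun i => C (f.coeff (i + 1)) * X ^ (i + 1))]

theorem resultant_not_identically_zero_general (n : ℕ) (hn : 2 ≤ n)
    (F : Type) [Field F]
    (α : Polynomial F) (hα : α ≠ 0) (hdeg : α.degree < n) :
    ∃ a : Fin (n - 1) → AlgebraicClosure F,
      Dpoly (fPoly n a) ≠ 0 ∧
      Dpoly (fPoly n a + α.map (algebraMap F (AlgebraicClosure F))) ≠ 0 ∧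
      ¬ ∃ ρ : AlgebraicClosure F,
          Polynomial.eval ρ (Dpoly (fPoly n a)) = 0 ∧
          Polynomial.eval ρ (Dpoly (fPoly n a + α.map (algebraMap F (AlgebraicClosure F)))) = 0 := by
  set β := α.map (algebraMap F (AlgebraicClosure F))
  have hβ : β.degree < n := by rwa [degree_map]
  obtain ⟨f, hf, hfn, hf0, hf', hfβ', hcrit⟩ :=
    if hnK : (n : AlgebraicClosure F) = 0 then
      exists_disjointCriticalValues_of_natCast_eq_zero hn hnK β
    else exists_disjointCriticalValues_of_natCast_ne_zero hnK (Polynomial.map_ne_zero hα) hβ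
  have hfβ : (f + β).Monic := hf.add_of_left (by rwa [degree_eq_natDegree hf.ne_zero, hfn])
  obtain ⟨a, rfl⟩ : ∃ a, fPoly n a = f := ⟨_, fPoly_coeff_succ (by omega) hf hfn hf0⟩
  exact ⟨a, Dpoly_ne_zero hf hf', Dpoly_ne_zero hfβ hfβ', fun ⟨ρ, hρ⟩ =>
    hcrit.not_eval_Dpoly_eq_zero hf (natDegree_pos_of_derivative_ne_zero hf') hfβ
      (natDegree_pos_of_derivative_ne_zero hfβ') ρ hρ⟩

/-- **Proposition 3.1** (non-vanishing of the resultant): for a nonzero `α ∈ F_q[x]` of degree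
`< n`, there is a coefficient vector `a` over the algebraic closure `F̄_q` such that
`D_{f_a}(t)` and `D_{f_a+α}(t)` are both nonzero and have no common root in `F̄_q`;
equivalently, `a ↦ Res_t(D_{f_a}, D_{f_a+α})` is not identically zero on `F̄_q^{n-1}`. -/
theorem resultant_not_identically_zero (q n : ℕ) (hq : Odd q) (hn : 2 ≤ n)
    (F : Type) [Field F] [Fintype F] (hF : Fintype.card F = q)
    (α : Polynomial F) (hα : α ≠ 0) (hdeg : α.degree < n) :
    ∃ a : Fin (n - 1) → AlgebraicClosure F,
      Dpoly (fPoly n a) ≠ 0 ∧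
      Dpoly (fPoly n a + α.map (algebraMap F (AlgebraicClosure F))) ≠ 0 ∧
      ¬ ∃ ρ : AlgebraicClosure F,
          Polynomial.eval ρ (Dpoly (fPoly n a)) = 0 ∧
          Polynomial.eval ρ (Dpoly (fPoly n a + α.map (algebraMap F (AlgebraicClosure F)))) = 0 :=
  resultant_not_identically_zero_general n hn F α hα hdeg
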